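/- Consider the Hamiltonian H(L, Θ, P_L, P_Θ) = (1/2)(P_L²/4 + P_Θ²/L²) + L²(k/2 + 1 − cos Θ) with k = 4/3, on {L > 0} × ℝ³, with Hamilton's equations L' = P_L/4, Θ' = P_Θ/L², P_L' = P_Θ²/L³ − 2L(k/2 + 1 − cos Θ), P_Θ' = −L² sin Θ. Then the function Q(L, Θ, P_L, P_Θ) = (2/L)(L cos(Θ/2)·P_L − 2 sin(Θ/2)·P_Θ)·P_Θ + (8/3)L³ cos(Θ/2) sin Θ is a first integral: along every differentiable solution with L(t) > 0, the value of Q is constant in t. -/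

import Mathlib

/-! Along a solution, `dQ/dt` is the derivative of `Q` in the direction of the Hamiltonian vector
field, i.e. the Poisson bracket `{Q, H}`. After the half-angle substitutions
`sin Θ = 2 sin(Θ/2) cos(Θ/2)` and `cos Θ = 1 - 2 sin²(Θ/2)` it is a rational expression in
`L, P_L, P_Θ, sin(Θ/2), cos(Θ/2)` that simplifies to `-2 L cos(Θ/2) P_Θ (k - 4/3)`, so it vanishes
exactly for `k = 4/3`; a function with zero derivative on `ℝ` is constant. -/

/-- The third first integral Q = W₂ + A₀ for k = 4/3 (n = 2). -/
noncomputable def pendQ2 (L Θ PL PΘ : ℝ) : ℝ :=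
  (2 / L) * (L * Real.cos (Θ / 2) * PL - 2 * Real.sin (Θ / 2) * PΘ) * PΘ
    + (8 / 3) * L ^ 3 * Real.cos (Θ / 2) * Real.sin Θ

open Real

/-- The differential of `pendQ2` at `(L, Θ, PL, PΘ)` applied to `(L', Θ', PL', PΘ')`. -/
noncomputable def pendQ2Deriv (L Θ PL PΘ L' Θ' PL' PΘ' : ℝ) : ℝ :=
  (4 * sin (Θ / 2) * PΘ ^ 2 / L ^ 2 + 8 * L ^ 2 * cos (Θ / 2) * sin Θ) * L'
    + (-sin (Θ / 2) * PL * PΘ - 2 * cos (Θ / 2) * PΘ ^ 2 / L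
        + 8 / 3 * L ^ 3 * (cos (Θ / 2) * cos Θ - sin (Θ / 2) * sin Θ / 2)) * Θ'
    + 2 * cos (Θ / 2) * PΘ * PL'
    + (2 * cos (Θ / 2) * PL - 8 * sin (Θ / 2) * PΘ / L) * PΘ'

theorem HasDerivAt.pendQ2 {L Θ PL PΘ : ℝ → ℝ} {L' Θ' PL' PΘ' t : ℝ}
    (hL : HasDerivAt L L' t) (hΘ : HasDerivAt Θ Θ' t) (hPL : HasDerivAt PL PL' t)
    (hPΘ : HasDerivAt PΘ PΘ' t) (hL₀ : L t ≠ 0) :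
    HasDerivAt (fun t => pendQ2 (L t) (Θ t) (PL t) (PΘ t))
      (pendQ2Deriv (L t) (Θ t) (PL t) (PΘ t) L' Θ' PL' PΘ') t := by
  have hhalf := hΘ.div_const 2
  have hW := (((hasDerivAt_const t 2).div hL hL₀).mul
    (((hL.mul hhalf.cos).mul hPL).sub (((hasDerivAt_const t 2).mul hhalf.sin).mul hPΘ))).mul hPΘ
  have hA := (((hasDerivAt_const t (8 / 3)).mul (hL.pow 3)).mul hhalf.cos).mul hΘ.sin
  refine (hW.add hA).congr_deriv ?_
  simp only [pendQ2Deriv, Pi.mul_apply, Pi.div_apply, Pi.sub_apply, Pi.pow_apply]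
  field_simp
  ring

theorem pendQ2Deriv_hamiltonian (k L Θ PL PΘ : ℝ) (hL : L ≠ 0) :
    pendQ2Deriv L Θ PL PΘ (PL / 4) (PΘ / L ^ 2)
      (PΘ ^ 2 / L ^ 3 - 2 * L * (k / 2 + 1 - cos Θ)) (-(L ^ 2) * sin Θ)
      = -2 * L * cos (Θ / 2) * PΘ * (k - 4 / 3) := by
  have hsin : sin Θ = 2 * sin (Θ / 2) * cos (Θ / 2) := by
    rw [← sin_two_mul, mul_div_cancel₀ _ two_ne_zero]
  have hcos : cos Θ = 1 - 2 * sin (Θ / 2) ^ 2 := by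
    have h := cos_two_mul (Θ / 2)
    rw [mul_div_cancel₀ _ two_ne_zero] at h
    rw [h, cos_sq']
    ring
  simp only [pendQ2Deriv, hsin, hcos]
  field_simp
  ring

theorem Q_is_first_integral_n_two
    (k : ℝ) (hk : k = 4 / 3) (L Θ PL PΘ : ℝ → ℝ)
    (hLpos : ∀ t, 0 < L t)
    (hL : ∀ t, HasDerivAt L (PL t / 4) t)
    (hΘ : ∀ t, HasDerivAt Θ (PΘ t / L t ^ 2) t)
    (hPL : ∀ t, HasDerivAt PL
      (PΘ t ^ 2 / L t ^ 3 - 2 * L t * (k / 2 + 1 - Real.cos (Θ t))) t)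
    (hPΘ : ∀ t, HasDerivAt PΘ (-(L t ^ 2) * Real.sin (Θ t)) t) :
    ∀ t₁ t₂ : ℝ, pendQ2 (L t₁) (Θ t₁) (PL t₁) (PΘ t₁)
      = pendQ2 (L t₂) (Θ t₂) (PL t₂) (PΘ t₂) := by
  have hQ : ∀ t, HasDerivAt (fun t => pendQ2 (L t) (Θ t) (PL t) (PΘ t)) 0 t := fun t => by
    have h := (hL t).pendQ2 (hΘ t) (hPL t) (hPΘ t) (hLpos t).ne'
    rwa [pendQ2Deriv_hamiltonian _ _ _ _ _ (hLpos t).ne', hk, sub_self, mul_zero] at h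
  exact is_const_of_deriv_eq_zero (fun t => (hQ t).differentiableAt) (fun t => (hQ t).deriv)
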